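/- arXiv:2212.01821 — 3 statements merged into one kernel-verified Lean document; each statement's English description precedes it below -/
import Mathlib

section
/- Let S = {x_1, …, x_n} ⊆ S_d, let x* be an optimal median of S with OPT = Obj(S, x*), and for each i let I_i be an optimal unaligned-symbol set for x_i with respect to x*. Set ε = 0.03319 and α = ε/11, and assume |I_1| ≤ |I_2| ≤ ⋯ ≤ |I_n| and |I_1| ≥ (1−α)·OPT/n. Then at least one of the following holds: (1) there exist indices i_1 < i_2 < i_3 < i_4 < i_5 such that for all r, ℓ ∈ {i_1,…,i_5} with r < ℓ one has |I_r ∩ I_ℓ| ≤ ε·|I_r|, and moreover |I_{i_4}| ≤ (1+α)·OPT/n; or (2) there exists x_j ∈ S with Obj(S, x_j) ≤ 1.999·OPT. -/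
/-- The sequence representation of a permutation of `[d]`:
the symbol at position `i` is `x i`. -/
def permList {d : ℕ} (x : Equiv.Perm (Fin d)) : List (Fin d) :=
  (List.finRange d).map x

/-- The length of a longest common subsequence of two lists. -/
noncomputable def lcsLen {α : Type*} (l₁ l₂ : List α) : ℕ :=
  sSup {n | ∃ t : List α, t.length = n ∧ t.Sublist l₁ ∧ t.Sublist l₂}

/-- The Ulam distance between two permutations of `[d]`. -/
noncomputable def ulam {d : ℕ} (x y : Equiv.Perm (Fin d)) : ℕ :=
  d - lcsLen (permList x) (permList y)

/-- `I` is an unaligned-symbol set for `x` w.r.t. `y`: deleting the symbols of `I`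
from `x` yields a common subsequence of `x` and `y`. -/
def IsUnalignedSet {d : ℕ} (x y : Equiv.Perm (Fin d)) (I : Finset (Fin d)) : Prop :=
  ((permList x).filter (fun a => decide (a ∉ I))).Sublist (permList y)

/-- An unaligned-symbol set is optimal if its size equals the Ulam distance. -/
def IsOptimalUnalignedSet {d : ℕ} (x y : Equiv.Perm (Fin d)) (I : Finset (Fin d)) : Prop :=
  IsUnalignedSet x y I ∧ I.card = ulam x y


open List in
lemma sublist_eq_filter {α} [DecidableEq α] {s l : List α} (h : s.Sublist l) (hl : l.Nodup) :
    s = l.filter (· ∈ s) := by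
  induction h with
  | slnil => simp
  | @cons l₁ l₂ a h ih =>
      have hl' : l₂.Nodup := (List.nodup_cons.mp hl).2
      have ha : a ∉ l₁ := fun hm => (List.nodup_cons.mp hl).1 (h.subset hm)
      rw [filter_cons, if_neg (by simpa using ha), ← ih hl']
  | @cons_cons l₁ l₂ a h ih =>
      have hanl : a ∉ l₂ := (List.nodup_cons.mp hl).1
      have hl' : l₂.Nodup := (List.nodup_cons.mp hl).2
      rw [filter_cons, if_pos (by simp)]
      congr 1
      rw [List.filter_congr (q := fun b => decide (b ∈ l₁)) (fun b hb => by
        have : b ≠ a := fun e => hanl (e ▸ hb)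
        simp [this]), ← ih hl']

lemma permList_nodup {d : ℕ} (x : Equiv.Perm (Fin d)) : (permList x).Nodup :=
  (List.nodup_finRange d).map x.injective

lemma permList_mem {d : ℕ} (x : Equiv.Perm (Fin d)) (a : Fin d) : a ∈ permList x := by
  simpa [permList] using ⟨x.symm a, by simp⟩

lemma permList_length {d : ℕ} (x : Equiv.Perm (Fin d)) : (permList x).length = d := by
  simp [permList]

/-- Lemma C : unaligned filtered list equals the same filter on `y`. -/
lemma unaligned_filter_eq {d : ℕ} {x y : Equiv.Perm (Fin d)} {I : Finset (Fin d)}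
    (h : IsUnalignedSet x y I) :
    (permList x).filter (fun a => decide (a ∉ I)) = (permList y).filter (fun a => decide (a ∉ I)) := by
  have h2 := sublist_eq_filter h (permList_nodup y)
  rw [h2]
  refine List.filter_congr (fun b _ => ?_)
  by_cases hb : b ∈ I <;> simp [List.mem_filter, permList_mem, hb]

lemma lcsLen_bdd {d : ℕ} (x y : Equiv.Perm (Fin d)) :
    ∀ n ∈ {n | ∃ t : List (Fin d), t.length = n ∧ t.Sublist (permList x) ∧ t.Sublist (permList y)},
      n ≤ d := by
  rintro n ⟨t, rfl, htx, -⟩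
  simpa [permList_length] using htx.length_le

/-- Lemma D -/
lemma ulam_le_card_union {d : ℕ} {x y z : Equiv.Perm (Fin d)} {Iu Ju : Finset (Fin d)}
    (hx : IsUnalignedSet x z Iu) (hy : IsUnalignedSet y z Ju) :
    ulam x y ≤ (Iu ∪ Ju).card := by
  classical
  set K := Iu ∪ Ju with hK
  set w := (permList z).filter (fun a => decide (a ∉ K)) with hw
  have hwx : w.Sublist (permList x) := by
    have e1 : w = ((permList z).filter (fun a => decide (a ∉ Iu))).filter
        (fun a => decide (a ∉ Ju)) := by
      rw [List.filter_filter]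
      refine List.filter_congr (fun b _ => ?_)
      by_cases h1 : b ∈ Iu <;> by_cases h2 : b ∈ Ju <;> simp [hK, h1, h2]
    rw [e1, ← unaligned_filter_eq hx]
    exact List.filter_sublist.trans List.filter_sublist
  have hwy : w.Sublist (permList y) := by
    have e1 : w = ((permList z).filter (fun a => decide (a ∉ Ju))).filter
        (fun a => decide (a ∉ Iu)) := by
      rw [List.filter_filter]
      refine List.filter_congr (fun b _ => ?_)
      by_cases h1 : b ∈ Iu <;> by_cases h2 : b ∈ Ju <;> simp [hK, h1, h2]
    rw [e1, ← unaligned_filter_eq hy]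
    exact List.filter_sublist.trans List.filter_sublist
  have hwlen : w.length = d - K.card := by
    have hnd : w.Nodup := (permList_nodup z).filter _
    have : w.toFinset = Kᶜ := by
      ext a
      simp [hw, List.mem_filter, permList_mem]
    have hcard := List.toFinset_card_of_nodup hnd
    rw [this] at hcard
    rw [← hcard, Finset.card_compl, Fintype.card_fin]
  have hmem : (d - K.card) ∈ {n | ∃ t : List (Fin d), t.length = n ∧ t.Sublist (permList x) ∧ t.Sublist (permList y)} :=
    ⟨w, hwlen, hwx, hwy⟩
  have hle : d - K.card ≤ lcsLen (permList x) (permList y) :=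
    le_csSup ⟨d, fun n hn => lcsLen_bdd x y n hn⟩ hmem
  have hKd : K.card ≤ d := by simpa using Finset.card_le_card (Finset.subset_univ K)
  unfold ulam
  omega

lemma isUnaligned_refl {d : ℕ} (x : Equiv.Perm (Fin d)) : IsUnalignedSet x x (∅ : Finset (Fin d)) := by
  unfold IsUnalignedSet
  exact List.filter_sublist

lemma ulam_self {d : ℕ} (x : Equiv.Perm (Fin d)) : ulam x x = 0 := by
  have := ulam_le_card_union (isUnaligned_refl x) (isUnaligned_refl x)
  simpa using this

lemma ulam_eq_zero_iff {d : ℕ} {x y : Equiv.Perm (Fin d)} (h : ulam x y = 0) : x = y := by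
  have hne : {n | ∃ t : List (Fin d), t.length = n ∧ t.Sublist (permList x) ∧ t.Sublist (permList y)}.Nonempty :=
    ⟨0, [], rfl, List.nil_sublist _, List.nil_sublist _⟩
  have hbdd : BddAbove {n | ∃ t : List (Fin d), t.length = n ∧ t.Sublist (permList x) ∧ t.Sublist (permList y)} :=
    ⟨d, fun n hn => lcsLen_bdd x y n hn⟩
  have hmem := Nat.sSup_mem hne hbdd
  obtain ⟨t, ht, htx, hty⟩ := hmem
  have hdle : d ≤ lcsLen (permList x) (permList y) := by
    unfold ulam at h
    have : lcsLen (permList x) (permList y) ≤ d := by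
      refine csSup_le hne (fun n hn => lcsLen_bdd x y n hn)
    omega
  have htlen : t.length = d := le_antisymm (by simpa [permList_length] using htx.length_le) (ht ▸ hdle)
  have hex : permList x = permList y := by
    rw [← htx.eq_of_length (by rw [htlen, permList_length]),
        ← hty.eq_of_length (by rw [htlen, permList_length])]
  ext i
  have hi : (i : ℕ) < (permList x).length := by rw [permList_length]; exact i.isLt
  have hi' : (i : ℕ) < (permList y).length := by rw [permList_length]; exact i.isLt
  have hx : (permList x)[(i:ℕ)] = x i := by simp [permList]
  have hy : (permList y)[(i:ℕ)] = y i := by simp [permList]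
  rw [← hx, ← hy]
  simp [hex]

set_option maxHeartbeats 2000000 in
/-- Lemma 3.2 of the paper: with `ε = 0.03319` and `α = ε/11`, assuming
`|I_1| ≤ ⋯ ≤ |I_n|` and `|I_1| ≥ (1-α)·OPT/n`, either there are five indices with
pairwise small overlaps of unaligned-symbol sets and `|I_{i₄}| ≤ (1+α)·OPT/n`,
or some input permutation is a `1.999`-approximate median. -/
theorem ulam_median_five_tuple_or_good_input {d n : ℕ} (hn : 0 < n)
    (x : Fin n → Equiv.Perm (Fin d)) (hinj : Function.Injective x)
    (xstar : Equiv.Perm (Fin d))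
    (hopt : ∀ y : Equiv.Perm (Fin d), ∑ i, ulam (x i) xstar ≤ ∑ i, ulam (x i) y)
    (I : Fin n → Finset (Fin d))
    (hI : ∀ i, IsOptimalUnalignedSet (x i) xstar (I i))
    (hsorted : ∀ i j : Fin n, i ≤ j → (I i).card ≤ (I j).card)
    (h1 : (1 - (0.03319 : ℝ) / 11) * (∑ i, (ulam (x i) xstar : ℝ)) / (n : ℝ)
        ≤ ((I ⟨0, hn⟩).card : ℝ)) :
    (∃ i₁ i₂ i₃ i₄ i₅ : Fin n, i₁ < i₂ ∧ i₂ < i₃ ∧ i₃ < i₄ ∧ i₄ < i₅ ∧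
      (∀ r ∈ ({i₁, i₂, i₃, i₄, i₅} : Finset (Fin n)),
        ∀ l ∈ ({i₁, i₂, i₃, i₄, i₅} : Finset (Fin n)), r < l →
          ((I r ∩ I l).card : ℝ) ≤ (0.03319 : ℝ) * ((I r).card : ℝ)) ∧
      ((I i₄).card : ℝ)
        ≤ (1 + (0.03319 : ℝ) / 11) * (∑ i, (ulam (x i) xstar : ℝ)) / (n : ℝ)) ∨
    (∃ j : Fin n,
      (∑ i, (ulam (x i) (x j) : ℝ)) ≤ 1.999 * ∑ i, (ulam (x i) xstar : ℝ)) := by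
  classical
  have hcard : ∀ i, ((ulam (x i) xstar : ℕ) : ℝ) = ((I i).card : ℝ) := fun i => by
    rw [(hI i).2]
  have hOPTΔ : (∑ i, ((ulam (x i) xstar : ℕ) : ℝ)) = ∑ i, ((I i).card : ℝ) :=
    Finset.sum_congr rfl (fun i _ => hcard i)
  have hΔ0 : (0:ℝ) ≤ ((I (⟨0, hn⟩ : Fin n)).card : ℝ) := by positivity
  have hOPT0 : (0:ℝ) ≤ ∑ i, ((ulam (x i) xstar : ℕ) : ℝ) :=
    Finset.sum_nonneg (fun i _ => by positivity)
  -- Δ0 is minimal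
  have hmin : ∀ i : Fin n, (I (⟨0, hn⟩ : Fin n)).card ≤ (I i).card := fun i =>
    hsorted _ i (by simp [Fin.le_def])
  -- n * Δ0 ≤ OPT
  have hnΔ0 : (n : ℝ) * ((I (⟨0, hn⟩ : Fin n)).card : ℝ) ≤ ∑ i, ((ulam (x i) xstar : ℕ) : ℝ) := by
    rw [hOPTΔ]
    have := Finset.card_nsmul_le_sum Finset.univ (fun i => ((I i).card : ℝ))
      ((I (⟨0, hn⟩ : Fin n)).card : ℝ) (fun i _ => by simpa using (Nat.cast_le (α := ℝ)).mpr (hmin i))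
    simpa [nsmul_eq_mul] using this
  -- generic bound : ulam (x i) (x j) ≤ Δ i + Δ j - |I i ∩ I j|  (over ℝ)
  have hpair : ∀ i j : Fin n, ((ulam (x i) (x j) : ℕ) : ℝ)
      ≤ ((I i).card : ℝ) + ((I j).card : ℝ) - ((I i ∩ I j).card : ℝ) := by
    intro i j
    have h1 : ulam (x i) (x j) ≤ (I i ∪ I j).card := ulam_le_card_union (hI i).1 (hI j).1
    have h2 := Finset.card_union_add_card_inter (I i) (I j)
    have : ((I i ∪ I j).card : ℝ) = ((I i).card : ℝ) + ((I j).card : ℝ) - ((I i ∩ I j).card : ℝ) := by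
      have := congrArg (fun k : ℕ => (k : ℝ)) h2
      push_cast at this ⊢
      linarith
    rw [← this]
    exact_mod_cast h1
  by_cases hsmall : n ≤ 1000
  · -- small n : x 0 is a 1.999-approximation
    right
    refine ⟨⟨0, hn⟩, ?_⟩
    set j : Fin n := ⟨0, hn⟩ with hj
    have hself : ((ulam (x j) (x j) : ℕ) : ℝ) = 0 := by
      have : IsUnalignedSet (x j) (x j) (∅ : Finset (Fin d)) := List.filter_sublist
      have h0 := ulam_le_card_union this this
      simp at h0
      simp [h0]
    have hsum : ∑ i, ((ulam (x i) (x j) : ℕ) : ℝ)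
        ≤ (∑ i, ((ulam (x i) xstar : ℕ) : ℝ)) - ((I j).card : ℝ)
          + ((n:ℝ) - 1) * ((I j).card : ℝ) := by
      rw [← Finset.add_sum_erase Finset.univ _ (Finset.mem_univ j), hself, zero_add]
      have hterm : ∀ i ∈ Finset.univ.erase j, ((ulam (x i) (x j) : ℕ) : ℝ)
          ≤ ((I i).card : ℝ) + ((I j).card : ℝ) := fun i _ => by
        have := hpair i j
        have hint : (0:ℝ) ≤ ((I i ∩ I j).card : ℝ) := by positivity
        linarith
      calc ∑ i ∈ Finset.univ.erase j, ((ulam (x i) (x j) : ℕ) : ℝ)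
          ≤ ∑ i ∈ Finset.univ.erase j, (((I i).card : ℝ) + ((I j).card : ℝ)) :=
            Finset.sum_le_sum hterm
        _ = ∑ i ∈ Finset.univ.erase j, ((I i).card : ℝ)
            + (Finset.univ.erase j).card * ((I j).card : ℝ) := by
            rw [Finset.sum_add_distrib, Finset.sum_const, nsmul_eq_mul]
        _ = (∑ i, ((ulam (x i) xstar : ℕ) : ℝ)) - ((I j).card : ℝ)
            + ((n:ℝ) - 1) * ((I j).card : ℝ) := by
            rw [hOPTΔ, ← Finset.add_sum_erase Finset.univ (fun i => ((I i).card : ℝ))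
              (Finset.mem_univ j)]
            rw [Finset.card_erase_of_mem (Finset.mem_univ j), Finset.card_univ,
              Fintype.card_fin]
            have h1n : (1:ℕ) ≤ n := hn
            push_cast [h1n]
            ring
    have hn1 : (1:ℝ) ≤ (n:ℝ) := by exact_mod_cast hn
    have hn1000 : (n:ℝ) ≤ 1000 := by exact_mod_cast hsmall
    nlinarith [mul_nonneg hΔ0 (sub_nonneg.mpr hn1000), hnΔ0, hΔ0, hOPT0]
  · -- large n
    push_neg at hsmall
    have hn1001 : (1001:ℕ) ≤ n := hsmall
    have hn1001R : (1001:ℝ) ≤ (n:ℝ) := by exact_mod_cast hn1001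
    have hnRpos : (0:ℝ) < (n:ℝ) := by linarith
    set OPT := ∑ i, ((ulam (x i) xstar : ℕ) : ℝ) with hOPTdef
    -- OPT is positive
    have hOPTpos : (0:ℝ) < OPT := by
      rcases eq_or_lt_of_le hOPT0 with h0 | h0
      · exfalso
        have hz : ∀ i : Fin n, ((ulam (x i) xstar : ℕ) : ℝ) = 0 := by
          intro i
          have := (Finset.sum_eq_zero_iff_of_nonneg
            (fun i _ => by positivity : ∀ i ∈ Finset.univ, (0:ℝ) ≤ ((ulam (x i) xstar : ℕ) : ℝ))).mp
            h0.symm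
          exact this i (Finset.mem_univ i)
        have hxeq : ∀ i : Fin n, x i = xstar := fun i =>
          ulam_eq_zero_iff (by exact_mod_cast hz i)
        have h01 : (⟨0, by omega⟩ : Fin n) = (⟨1, by omega⟩ : Fin n) :=
          hinj (by rw [hxeq, hxeq])
        simp [Fin.mk.injEq] at h01
      · exact h0
    set q := OPT / (n:ℝ) with hqdef
    have hq : (0:ℝ) < q := div_pos hOPTpos hnRpos
    have hOPTq : OPT = (n:ℝ) * q := by
      rw [hqdef]; field_simp
    -- every set has size at least (1-α)q
    have hlow : ∀ i : Fin n, (1 - (0.03319:ℝ)/11) * q ≤ ((I i).card : ℝ) := by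
      intro i
      have h1' : (1 - (0.03319:ℝ)/11) * OPT / (n:ℝ) = (1 - (0.03319:ℝ)/11) * q := by
        rw [hqdef]; ring
      have h2' : ((I (⟨0, hn⟩ : Fin n)).card : ℝ) ≤ ((I i).card : ℝ) := by
        exact_mod_cast hmin i
      linarith [h1 , h1'.symm.le]
    -- the small indices
    set Small := Finset.univ.filter
      (fun i : Fin n => ((I i).card : ℝ) ≤ (1 + (0.03319:ℝ)/11) * q) with hSmalldef
    have hm2 : (n:ℝ) ≤ 2 * Small.card := by
      have hsplit := Finset.sum_filter_add_sum_filter_not Finset.univ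
        (fun i : Fin n => ((I i).card : ℝ) ≤ (1 + (0.03319:ℝ)/11) * q)
        (fun i => ((I i).card : ℝ))
      have hs1 : (Small.card : ℝ) * ((1 - (0.03319:ℝ)/11) * q) ≤
          ∑ i ∈ Small, ((I i).card : ℝ) := by
        have := Finset.card_nsmul_le_sum Small (fun i => ((I i).card : ℝ))
          ((1 - (0.03319:ℝ)/11) * q) (fun i _ => hlow i)
        simpa [nsmul_eq_mul] using this
      have hs2 : (((Finset.univ.filter
          (fun i : Fin n => ¬ (((I i).card : ℝ) ≤ (1 + (0.03319:ℝ)/11) * q))).card : ℝ))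
          * ((1 + (0.03319:ℝ)/11) * q) ≤
          ∑ i ∈ Finset.univ.filter
            (fun i : Fin n => ¬ (((I i).card : ℝ) ≤ (1 + (0.03319:ℝ)/11) * q)),
            ((I i).card : ℝ) := by
        have := Finset.card_nsmul_le_sum (Finset.univ.filter
            (fun i : Fin n => ¬ (((I i).card : ℝ) ≤ (1 + (0.03319:ℝ)/11) * q)))
          (fun i => ((I i).card : ℝ)) ((1 + (0.03319:ℝ)/11) * q)
          (fun i hi => le_of_lt (lt_of_not_ge (Finset.mem_filter.mp hi).2))
        simpa [nsmul_eq_mul] using this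
      have hcards : Small.card + (Finset.univ.filter
          (fun i : Fin n => ¬ (((I i).card : ℝ) ≤ (1 + (0.03319:ℝ)/11) * q))).card = n := by
        rw [hSmalldef]
        rw [Finset.card_filter_add_card_filter_not, Finset.card_univ, Fintype.card_fin]
      have hOPTsum : ∑ i, ((I i).card : ℝ) = OPT := hOPTΔ.symm
      have hcardsR : (Small.card : ℝ) + ((Finset.univ.filter
          (fun i : Fin n => ¬ (((I i).card : ℝ) ≤ (1 + (0.03319:ℝ)/11) * q))).card : ℝ)
          = (n : ℝ) := by exact_mod_cast hcards
      rw [← hSmalldef] at hsplit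
      nlinarith [hq, hsplit, hs1, hs2, hOPTsum, hcardsR, hOPTq,
        mul_le_mul_of_nonneg_right hcardsR.le hq.le,
        mul_le_mul_of_nonneg_right hcardsR.ge hq.le]
    -- good (scattered) subsets of Small
    set Good : Finset (Fin n) → Prop := fun T => ∀ r ∈ T, ∀ l ∈ T, r < l →
      ((I r ∩ I l).card : ℝ) ≤ (0.03319:ℝ) * ((I r).card : ℝ) with hGooddef
    set C := Small.powerset.filter Good with hCdef
    have hCne : C.Nonempty := ⟨∅, Finset.mem_filter.mpr
      ⟨Finset.mem_powerset.mpr (Finset.empty_subset _), fun r hr => absurd hr (by simp)⟩⟩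
    obtain ⟨T, hTC, hTmax⟩ := C.exists_max_image Finset.card hCne
    have hTSmall : T ⊆ Small := Finset.mem_powerset.mp (Finset.mem_filter.mp hTC).1
    have hTGood : Good T := (Finset.mem_filter.mp hTC).2
    by_cases hT5 : 5 ≤ T.card
    · -- found a scattered 5-tuple
      left
      have hLlen : (T.sort (· ≤ ·)).length = T.card := Finset.length_sort _
      have h5 : 5 ≤ (T.sort (· ≤ ·)).length := by omega
      have hsortedL : (T.sort (· ≤ ·)).Pairwise (· < ·) := (Finset.sortedLT_sort T).pairwise
      set L := T.sort (· ≤ ·) with hLdef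
      have hget : ∀ (k : ℕ) (hk : k < L.length), L.get ⟨k, hk⟩ ∈ T := by
        intro k hk
        have hmem : L.get ⟨k, hk⟩ ∈ L := List.get_mem L ⟨k, hk⟩
        exact (Finset.mem_sort (α := Fin n) (· ≤ ·)).mp hmem
      refine ⟨L.get ⟨0, by omega⟩, L.get ⟨1, by omega⟩, L.get ⟨2, by omega⟩,
        L.get ⟨3, by omega⟩, L.get ⟨4, by omega⟩, ?_, ?_, ?_, ?_, ?_, ?_⟩
      · exact hsortedL.rel_get_of_lt (by simp)
      · exact hsortedL.rel_get_of_lt (by simp)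
      · exact hsortedL.rel_get_of_lt (by simp)
      · exact hsortedL.rel_get_of_lt (by simp)
      · intro r hr l hl hrl
        have hrT : r ∈ T := by
          simp only [Finset.mem_insert, Finset.mem_singleton] at hr
          rcases hr with h|h|h|h|h <;> exact h ▸ hget _ _
        have hlT : l ∈ T := by
          simp only [Finset.mem_insert, Finset.mem_singleton] at hl
          rcases hl with h|h|h|h|h <;> exact h ▸ hget _ _
        exact hTGood r hrT l hlT hrl
      · have hi4 : L.get ⟨3, by omega⟩ ∈ Small := hTSmall (hget 3 (by omega))
        have := (Finset.mem_filter.mp hi4).2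
        have heq : (1 + (0.03319:ℝ)/11) * OPT / (n:ℝ) = (1 + (0.03319:ℝ)/11) * q := by
          rw [hqdef]; ring
        rw [heq]
        exact this
    · -- no scattered 5-tuple: some input is a good median
      push_neg at hT5
      have hT4 : T.card ≤ 4 := by omega
      have hSmallpos : (0:ℝ) < (Small.card : ℝ) := by linarith
      have hSmallne : Small.Nonempty := Finset.card_pos.mp (by exact_mod_cast hSmallpos)
      have hTne : T.Nonempty := by
        obtain ⟨s, hs⟩ := hSmallne
        have hsC : {s} ∈ C := Finset.mem_filter.mpr
          ⟨Finset.mem_powerset.mpr (Finset.singleton_subset_iff.mpr hs),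
           fun r hr l hl hrl => by
            simp only [Finset.mem_singleton] at hr hl
            exact absurd (hr ▸ hl ▸ hrl) (lt_irrefl _)⟩
        have := hTmax {s} hsC
        rw [Finset.card_singleton] at this
        exact Finset.card_pos.mp (by omega)
      -- every other small index conflicts with some member of T
      have hconf : ∀ l ∈ Small \ T, ∃ r ∈ T,
          (0.03319:ℝ) * ((1 - (0.03319:ℝ)/11) * q) < ((I r ∩ I l).card : ℝ) := by
        intro l hl
        obtain ⟨hlS, hlT⟩ := Finset.mem_sdiff.mp hl
        by_contra hno
        push_neg at hno
        have hins : insert l T ∈ C := by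
          refine Finset.mem_filter.mpr ⟨Finset.mem_powerset.mpr
            (Finset.insert_subset hlS hTSmall), ?_⟩
          intro r hr l' hl' hrl'
          have hεpos : (0:ℝ) ≤ (0.03319:ℝ) := by norm_num
          rcases Finset.mem_insert.mp hr with hr1 | hr2
          · rcases Finset.mem_insert.mp hl' with h2 | h2
            · exact absurd (hr1 ▸ h2 ▸ hrl') (lt_irrefl _)
            · -- r = l, l' ∈ T
              subst hr1
              have := hno l' h2
              rw [Finset.inter_comm] at this
              have hlo := hlow r
              nlinarith
          · rcases Finset.mem_insert.mp hl' with h2 | h2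
            · subst h2
              have := hno r hr2
              have hlo := hlow r
              nlinarith
            · exact hTGood r hr2 l' h2 hrl'
        have := hTmax _ hins
        rw [Finset.card_insert_of_notMem hlT] at this
        omega
      -- pigeonhole: one member of T conflicts with many
      set cs : Fin n → Finset (Fin n) := fun r => (Small \ T).filter
        (fun l => (0.03319:ℝ) * ((1 - (0.03319:ℝ)/11) * q) < ((I r ∩ I l).card : ℝ)) with hcsdef
      have hsubb : Small \ T ⊆ T.biUnion cs := by
        intro l hl
        obtain ⟨r, hrT, hrc⟩ := hconf l hl
        exact Finset.mem_biUnion.mpr ⟨r, hrT, Finset.mem_filter.mpr ⟨hl, hrc⟩⟩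
      have hcard1 : (Small \ T).card ≤ ∑ r ∈ T, (cs r).card :=
        le_trans (Finset.card_le_card hsubb) Finset.card_biUnion_le
      obtain ⟨r, hrT, hrmax⟩ := T.exists_max_image (fun r => (cs r).card) hTne
      have hcard2 : ∑ r' ∈ T, (cs r').card ≤ T.card * (cs r).card := by
        have := Finset.sum_le_card_nsmul T (fun r' => (cs r').card) ((cs r).card)
          (fun i hi => hrmax i hi)
        simpa [nsmul_eq_mul] using this
      have hsd : (Small \ T).card = Small.card - T.card := Finset.card_sdiff_of_subset hTSmall
      have hTS : T.card ≤ Small.card := Finset.card_le_card hTSmall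
      have hkey : Small.card ≤ 4 * (cs r).card + 4 := by
        have h4c : T.card * (cs r).card ≤ 4 * (cs r).card :=
          Nat.mul_le_mul_right _ hT4
        omega
      have hkeyR : (Small.card : ℝ) ≤ 4 * ((cs r).card : ℝ) + 4 := by exact_mod_cast hkey
      have h8c : (n:ℝ) ≤ 8 * ((cs r).card : ℝ) + 8 := by linarith
      -- r is a good median
      right
      refine ⟨r, ?_⟩
      have hrSmall : ((I r).card : ℝ) ≤ (1 + (0.03319:ℝ)/11) * q :=
        (Finset.mem_filter.mp (hTSmall hrT)).2
      have hterm : ∀ i : Fin n, ((ulam (x i) (x r) : ℕ) : ℝ)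
          ≤ ((I i).card : ℝ) + ((I r).card : ℝ)
            - (if i ∈ cs r then (0.03319:ℝ) * ((1 - (0.03319:ℝ)/11) * q) else 0) := by
        intro i
        by_cases hi : i ∈ cs r
        · have hc := (Finset.mem_filter.mp hi).2
          rw [if_pos hi]
          have hcomm : ((I r ∩ I i).card : ℝ) = ((I i ∩ I r).card : ℝ) := by
            rw [Finset.inter_comm]
          linarith [hpair i r]
        · rw [if_neg hi]
          have hint : (0:ℝ) ≤ ((I i ∩ I r).card : ℝ) := Nat.cast_nonneg _
          linarith [hpair i r]
      have hsumf : ∑ i, ((ulam (x i) (x r) : ℕ) : ℝ)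
          ≤ OPT + (n:ℝ) * ((I r).card : ℝ)
            - ((cs r).card : ℝ) * ((0.03319:ℝ) * ((1 - (0.03319:ℝ)/11) * q)) := by
        calc ∑ i, ((ulam (x i) (x r) : ℕ) : ℝ)
            ≤ ∑ i, (((I i).card : ℝ) + ((I r).card : ℝ)
              - (if i ∈ cs r then (0.03319:ℝ) * ((1 - (0.03319:ℝ)/11) * q) else 0)) :=
              Finset.sum_le_sum (fun i _ => hterm i)
          _ = OPT + (n:ℝ) * ((I r).card : ℝ)
              - ((cs r).card : ℝ) * ((0.03319:ℝ) * ((1 - (0.03319:ℝ)/11) * q)) := by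
              rw [Finset.sum_sub_distrib, Finset.sum_add_distrib, Finset.sum_const,
                Finset.sum_ite_mem, Finset.univ_inter, Finset.sum_const,
                Finset.card_univ, Fintype.card_fin, ← hOPTΔ]
              push_cast
              ring
      have hcpos : (0:ℝ) ≤ ((cs r).card : ℝ) := Nat.cast_nonneg _
      have hA : (n:ℝ) * ((I r).card : ℝ) ≤ (n:ℝ) * ((1 + (0.03319:ℝ)/11) * q) :=
        mul_le_mul_of_nonneg_left hrSmall (le_of_lt hnRpos)
      have hKpos : (0:ℝ) ≤ (0.03319:ℝ) * ((1 - (0.03319:ℝ)/11) * q) := by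
        have := hq.le; nlinarith
      have hC2 : (((n:ℝ) - 8)/8) * ((0.03319:ℝ) * ((1 - (0.03319:ℝ)/11) * q))
          ≤ ((cs r).card : ℝ) * ((0.03319:ℝ) * ((1 - (0.03319:ℝ)/11) * q)) := by
        apply mul_le_mul_of_nonneg_right _ hKpos
        linarith
      have hD : (n:ℝ) * q + (n:ℝ) * ((1 + (0.03319:ℝ)/11) * q)
          - (((n:ℝ) - 8)/8) * ((0.03319:ℝ) * ((1 - (0.03319:ℝ)/11) * q))
          ≤ 1.999 * ((n:ℝ) * q) := by
        nlinarith [mul_nonneg hq.le (sub_nonneg.mpr hn1001R), hq.le]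
      rw [hOPTq] at hsumf ⊢
      linarith
end

section
/- Let y* ∈ S_d, let x_i, x_j ∈ S_d, let I_i be an optimal unaligned-symbol set for x_i with respect to y* and I_j an optimal unaligned-symbol set for x_j with respect to y*, and let ε ∈ [0,1]. If |I_j| ≤ |I_i| and |I_i ∩ I_j| ≥ ε·|I_j|, then Δ(x_i, x_j) ≤ (2−ε)·|I_i| = (2−ε)·Δ(x_i, y*). -/
lemma permList_toFinset {d : ℕ} (x : Equiv.Perm (Fin d)) :
    (permList x).toFinset = Finset.univ := by
  ext a
  simp [permList, List.mem_map]
  exact ⟨x.symm a, by simp⟩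

lemma filter_not_toFinset {d : ℕ} (x : Equiv.Perm (Fin d)) (I : Finset (Fin d)) :
    ((permList x).filter (fun a => decide (a ∉ I))).toFinset = Iᶜ := by
  ext a
  simp [List.mem_filter, permList, Finset.mem_compl]
  intro _
  exact ⟨x.symm a, by simp⟩

lemma filter_not_length {d : ℕ} (x : Equiv.Perm (Fin d)) (I : Finset (Fin d)) :
    ((permList x).filter (fun a => decide (a ∉ I))).length = d - I.card := by
  have hnd : ((permList x).filter (fun a => decide (a ∉ I))).Nodup :=
    (permList_nodup x).filter _
  have := List.toFinset_card_of_nodup hnd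
  rw [filter_not_toFinset] at this
  rw [← this, Finset.card_compl, Fintype.card_fin]

lemma le_lcsLen {α : Type*} {l₁ l₂ t : List α} (h₁ : t.Sublist l₁) (h₂ : t.Sublist l₂) :
    t.length ≤ lcsLen l₁ l₂ := by
  apply le_csSup
  · exact ⟨l₁.length, fun n ⟨s, hs, hs1, _⟩ => hs ▸ hs1.length_le⟩
  · exact ⟨t, rfl, h₁, h₂⟩

/-- Claim (iii) of the proof of Lemma 3.2: a large overlap of the optimal unaligned-symbol
sets forces `Δ(x_i, x_j) ≤ (2-ε)·|I_i| = (2-ε)·Δ(x_i, y*)`. -/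
theorem ulam_le_of_large_overlap {d : ℕ} (ystar xi xj : Equiv.Perm (Fin d))
    (Ii Ij : Finset (Fin d))
    (hIi : IsOptimalUnalignedSet xi ystar Ii)
    (hIj : IsOptimalUnalignedSet xj ystar Ij)
    (ε : ℝ) (hε0 : 0 ≤ ε) (hε1 : ε ≤ 1)
    (hle : Ij.card ≤ Ii.card)
    (hover : ε * (Ij.card : ℝ) ≤ ((Ii ∩ Ij).card : ℝ)) :
    (ulam xi xj : ℝ) ≤ (2 - ε) * (Ii.card : ℝ) ∧
      (2 - ε) * (Ii.card : ℝ) = (2 - ε) * (ulam xi ystar : ℝ) := by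
  have hzj : (permList xj).filter (fun a => decide (a ∉ Ij))
      = (permList ystar).filter (fun a => decide (a ∉ Ij)) := by
    have hself : ((permList xj).filter (fun a => decide (a ∉ Ij))).filter
        (fun a => decide (a ∉ Ij)) = (permList xj).filter (fun a => decide (a ∉ Ij)) :=
      List.filter_eq_self.mpr fun a ha => (List.mem_filter.mp ha).2
    have hsub : ((permList xj).filter (fun a => decide (a ∉ Ij))).Sublist
        ((permList ystar).filter (fun a => decide (a ∉ Ij))) :=
      hself ▸ List.Sublist.filter _ hIj.1
    exact hsub.eq_of_length (by rw [filter_not_length, filter_not_length])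
  set t : List (Fin d) := ((permList xi).filter (fun a => decide (a ∉ Ii))).filter
    (fun a => decide (a ∉ Ij)) with ht
  have ht1 : t.Sublist (permList xi) :=
    List.filter_sublist.trans List.filter_sublist
  have ht2 : t.Sublist (permList xj) := by
    have h1 : t.Sublist ((permList ystar).filter (fun a => decide (a ∉ Ij))) :=
      List.Sublist.filter _ hIi.1
    rw [← hzj] at h1
    exact h1.trans List.filter_sublist
  have htlen : t.length = d - (Ii ∪ Ij).card := by
    rw [ht, List.filter_filter]
    rw [show (fun a => decide (a ∉ Ij) && decide (a ∉ Ii))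
        = (fun a : Fin d => decide (a ∉ (Ii ∪ Ij))) by
      funext a; simp [Finset.mem_union, Bool.and_comm]]
    exact filter_not_length xi (Ii ∪ Ij)
  have hcard_le : (Ii ∪ Ij).card ≤ d := by
    simpa using Finset.card_le_card (Finset.subset_univ (Ii ∪ Ij))
  have hlcs : d - (Ii ∪ Ij).card ≤ lcsLen (permList xi) (permList xj) := by
    rw [← htlen]; exact le_lcsLen ht1 ht2
  have hulam : ulam xi xj ≤ (Ii ∪ Ij).card := by
    unfold ulam; omega
  have hunion : ((Ii ∪ Ij).card : ℝ) + ((Ii ∩ Ij).card : ℝ) = (Ii.card : ℝ) + (Ij.card : ℝ) := by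
    exact_mod_cast congrArg (Nat.cast (R := ℝ)) (Finset.card_union_add_card_inter Ii Ij)
  constructor
  · have h1 : (ulam xi xj : ℝ) ≤ ((Ii ∪ Ij).card : ℝ) := by exact_mod_cast hulam
    have h2 : (Ij.card : ℝ) ≤ (Ii.card : ℝ) := by exact_mod_cast hle
    nlinarith
  · rw [hIi.2]
end

section
/- Let (X, d) be a metric space, let x_1, …, x_n ∈ X with n ≥ 1, let y ∈ X, and write ℓ_i := d(x_i, y) and L := Σ_{i=1}^n ℓ_i. Suppose ℓ_1 = min_i ℓ_i, let α ∈ (0, 1], and let F := {i : ℓ_i ≥ (1+α)·L/n}. Then Σ_{i=1}^n d(x_i, x_1) ≤ 2L − (α/2)·Σ_{i∈F} ℓ_i. -/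
/-!
Every point is within `ℓ_i + ℓ_1 ≤ 2ℓ_i` of `x_1` by the triangle inequality through `y`.
For a far point, `(1+α)·ℓ_1 ≤ (1+α)·L/n ≤ ℓ_i` since the minimum is at most the average,
and `1/(1+α) ≤ 1 - α/2` for `α ∈ [0, 1]`, so the bound improves to `(2 - α/2)·ℓ_i`.
-/

open Finset

lemma add_le_two_sub_half_mul_of_one_add_mul_le {a b α : ℝ} (hα0 : 0 ≤ α) (hα1 : α ≤ 1)
    (hb : 0 ≤ b) (hab : (1 + α) * b ≤ a) : a + b ≤ (2 - α / 2) * a := by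
  nlinarith [mul_le_mul_of_nonneg_left hab (by linarith : (0 : ℝ) ≤ 1 - α / 2),
    mul_nonneg (mul_nonneg hα0 (sub_nonneg.mpr hα1)) hb]

lemma dist_le_two_sub_half_mul_of_one_add_mul_le {X : Type*} [PseudoMetricSpace X]
    {p z y : X} {α : ℝ} (hα0 : 0 ≤ α) (hα1 : α ≤ 1) (hfar : (1 + α) * dist z y ≤ dist p y) :
    dist p z ≤ (2 - α / 2) * dist p y :=
  (dist_triangle_right p z y).trans <|
    add_le_two_sub_half_mul_of_one_add_mul_le hα0 hα1 dist_nonneg hfar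

lemma Finset.sum_le_mul_sum_sub_mul_sum {ι : Type*} [Fintype ι] (F : Finset ι) (f g : ι → ℝ)
    (a c : ℝ) (hF : ∀ i ∈ F, g i ≤ (a - c) * f i) (hFc : ∀ i ∉ F, g i ≤ a * f i) :
    ∑ i, g i ≤ a * ∑ i, f i - c * ∑ i ∈ F, f i := by
  classical
  have hsumF := sum_le_sum hF
  have hsumFc := sum_le_sum fun i hi => hFc i (mem_compl.mp hi)
  rw [← mul_sum] at hsumF hsumFc
  rw [← sum_add_sum_compl F g, ← sum_add_sum_compl F f]
  linarith

/-- Inequality (4) in the proof of Lemma 3.2: if `x 0` attains the minimum distance to `y`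
and `F` is the set of far points (distance at least `(1+α)·L/n` from `y`), then
`Σ_i d(x_i, x 0) ≤ 2L - (α/2)·Σ_{i∈F} d(x_i, y)`. -/
theorem sum_dist_to_min_point_le {X : Type*} [MetricSpace X] {n : ℕ} (hn : 1 ≤ n)
    (x : Fin n → X) (y : X)
    (α : ℝ) (hα0 : 0 < α) (hα1 : α ≤ 1)
    (hmin : ∀ i, dist (x ⟨0, hn⟩) y ≤ dist (x i) y)
    (F : Finset (Fin n))
    (hF : ∀ i, i ∈ F ↔ (1 + α) * (∑ j, dist (x j) y) / (n : ℝ) ≤ dist (x i) y) :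
    ∑ i, dist (x i) (x ⟨0, hn⟩)
      ≤ 2 * (∑ i, dist (x i) y) - (α / 2) * ∑ i ∈ F, dist (x i) y := by
  set z := x ⟨0, hn⟩
  have hmin_le_avg : (n : ℝ) * dist z y ≤ ∑ j, dist (x j) y := by
    simpa using card_nsmul_le_sum univ (fun j => dist (x j) y) _ fun i _ => hmin i
  have hfar : ∀ i ∈ F, (1 + α) * dist z y ≤ dist (x i) y := by
    refine fun i hi => le_trans ?_ ((hF i).mp hi)
    rw [le_div_iff₀ (by positivity), mul_assoc, mul_comm (dist z y)]
    gcongr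
  refine sum_le_mul_sum_sub_mul_sum F _ _ 2 (α / 2)
    (fun i hi => dist_le_two_sub_half_mul_of_one_add_mul_le hα0.le hα1 (hfar i hi))
    (fun i _ => (dist_triangle_right _ _ y).trans (by linarith [hmin i]))
end
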